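/- arXiv:2204.11213 — 3 statements merged into one kernel-verified Lean document; each statement's English description precedes it below -/
import Mathlib

section
/- Let A_1, …, A_n be nonempty words with R(A_1) ≤ R(A_2) ≤ … ≤ R(A_n) (lexicographic order on infinite periodic words). Then for every permutation π of {1,…,n}, the concatenation A_1A_2⋯A_n is lexicographically less than or equal to A_{π(1)}A_{π(2)}⋯A_{π(n)}. -/
/-- `wpow A n` is the `n`-fold concatenation `A^n` of the word `A`. -/
def wpow {α : Type*} (A : List α) : ℕ → List α
  | 0 => []
  | n + 1 => A ++ wpow A n


/-- `R A` is the infinite periodic word `AAA⋯`: `R A i = A (i % |A|)`. -/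
def R {α : Type*} [Inhabited α] (A : List α) : ℕ → α :=
  fun i => A.getD (i % A.length) default

/-- Strict lexicographic order on infinite words. -/
def InfLt {α : Type*} [LinearOrder α] (f g : ℕ → α) : Prop :=
  ∃ i, (∀ j < i, f j = g j) ∧ f i < g i

/-- Lexicographic (non-strict) order on infinite words. -/
def InfLe {α : Type*} [LinearOrder α] (f g : ℕ → α) : Prop :=
  f = g ∨ InfLt f g

/-!
The map `s ↦ x · s` on infinite words is monotone for the lexicographic order, and its iterates
`x^k · s` converge letterwise to `R x`; hence `x · s ≤ s ↔ R x ≤ s` and `s ≤ x · s ↔ s ≤ R x`.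
As `R (xy) = x · R (yx)`, chaining these turns `R x ≤ R y` into `R (xy) ≤ R (yx)`, and comparing
the first `|xy|` letters gives `xy ≤ yx`. A list of words that is pairwise ordered in this way has
the smallest concatenation among its rearrangements: in any rearrangement, its first word can be
moved to the front one swap at a time without increasing the concatenation.
-/

section Periodic

variable {α : Type*}

def appendInf (u : List α) (s : ℕ → α) : ℕ → α :=
  fun i => if h : i < u.length then u[i] else s (i - u.length)

infixr:60 " ++ᵢ " => appendInf

theorem appendInf_apply_of_lt {u : List α} {i : ℕ} (h : i < u.length) (s : ℕ → α) :
    (u ++ᵢ s) i = u[i] := dif_pos h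

@[simp]
theorem appendInf_apply_length_add (u : List α) (s : ℕ → α) (i : ℕ) :
    (u ++ᵢ s) (u.length + i) = s i := by
  simp [appendInf]

@[simp]
theorem nil_appendInf (s : ℕ → α) : [] ++ᵢ s = s := by
  funext i; simp [appendInf]

theorem append_appendInf (u v : List α) (s : ℕ → α) : (u ++ v) ++ᵢ s = u ++ᵢ (v ++ᵢ s) := by
  funext i
  rcases lt_or_ge i u.length with hu | hu
  · rw [appendInf_apply_of_lt (by simp; omega), appendInf_apply_of_lt hu,
      List.getElem_append_left hu]
  obtain ⟨i, rfl⟩ := Nat.exists_eq_add_of_le hu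
  rcases lt_or_ge i v.length with hv | hv
  · rw [appendInf_apply_of_lt (by simp; omega), List.getElem_append_right (by omega)]
    simp [appendInf_apply_of_lt hv]
  · obtain ⟨i, rfl⟩ := Nat.exists_eq_add_of_le hv
    rw [appendInf_apply_length_add u, appendInf_apply_length_add v, ← add_assoc,
      ← List.length_append, appendInf_apply_length_add]

theorem length_wpow (A : List α) (k : ℕ) : (wpow A k).length = k * A.length := by
  induction k with
  | zero => simp [wpow]
  | succ k ih => simp [wpow, ih, Nat.succ_mul, Nat.add_comm]

theorem eq_wpow_appendInf_of_eq_appendInf {A : List α} {s : ℕ → α}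
    (h : s = A ++ᵢ s) (k : ℕ) : s = wpow A k ++ᵢ s := by
  induction k with
  | zero => simp [wpow]
  | succ k ih => rw [wpow, append_appendInf, ← ih, ← h]

variable [Inhabited α]

theorem R_eq_appendInf_R (A : List α) : R A = A ++ᵢ R A := by
  funext i
  rcases lt_or_ge i A.length with hi | hi
  · rw [appendInf_apply_of_lt hi, R, Nat.mod_eq_of_lt hi, List.getD_eq_getElem]
  · obtain ⟨k, rfl⟩ := Nat.exists_eq_add_of_le hi
    simp [R, Nat.add_mod_left]

theorem R_eq_wpow_appendInf_R (A : List α) (k : ℕ) : R A = wpow A k ++ᵢ R A :=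
  eq_wpow_appendInf_of_eq_appendInf (R_eq_appendInf_R A) k

theorem wpow_appendInf_apply_of_lt {A : List α} (hA : A ≠ []) (s : ℕ → α) {k j : ℕ}
    (hj : j < k) : (wpow A k ++ᵢ s) j = R A j := by
  have hj' : j < (wpow A k).length := by
    rw [length_wpow]
    nlinarith [List.length_pos_iff.mpr hA]
  rw [R_eq_wpow_appendInf_R A k, appendInf_apply_of_lt hj', appendInf_apply_of_lt hj']

theorem eq_R_of_eq_appendInf {A : List α} (hA : A ≠ []) {s : ℕ → α}
    (h : s = A ++ᵢ s) : s = R A := by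
  funext i
  rw [eq_wpow_appendInf_of_eq_appendInf h (i + 1), wpow_appendInf_apply_of_lt hA s i.lt_succ_self]

theorem R_append_eq_appendInf_R_append {x y : List α} (hx : x ≠ []) :
    R (x ++ y) = x ++ᵢ R (y ++ x) := by
  refine (eq_R_of_eq_appendInf (by simp [hx]) ?_).symm
  rw [append_appendInf, ← append_appendInf y x, ← R_eq_appendInf_R]

end Periodic

section InfiniteLex

variable {α : Type*} [LinearOrder α]

theorem infLe_iff_toLex_le {f g : ℕ → α} : InfLe f g ↔ toLex f ≤ toLex g := by
  rw [le_iff_eq_or_lt, toLex_inj]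
  rfl

theorem exists_prefix_toLex_lt {f g : ℕ → α} (h : toLex f < toLex g) :
    ∃ n, ∀ f' g' : ℕ → α, (∀ j < n, f' j = f j) → (∀ j < n, g' j = g j) →
      toLex f' < toLex g' := by
  obtain ⟨i, hi, hlt⟩ := h
  refine ⟨i + 1, fun f' g' hf hg => ⟨i, fun j hj => ?_, ?_⟩⟩
  · simpa [hf j (by omega), hg j (by omega)] using hi j hj
  · simpa [hf i (by omega), hg i (by omega)] using hlt

theorem toLex_appendInf_lt_toLex_appendInf (u : List α) {s t : ℕ → α}
    (h : toLex s < toLex t) : toLex (u ++ᵢ s) < toLex (u ++ᵢ t) := by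
  obtain ⟨i, hi, hlt⟩ := h
  refine ⟨u.length + i, fun j hj => ?_, by simpa using hlt⟩
  rcases lt_or_ge j u.length with hju | hju
  · simp [appendInf_apply_of_lt hju]
  · obtain ⟨j, rfl⟩ := Nat.exists_eq_add_of_le hju
    simpa using hi j (by omega)

theorem toLex_appendInf_le_toLex_appendInf (u : List α) {s t : ℕ → α}
    (h : toLex s ≤ toLex t) : toLex (u ++ᵢ s) ≤ toLex (u ++ᵢ t) := by
  rcases h.lt_or_eq with h | h
  · exact (toLex_appendInf_lt_toLex_appendInf u h).le
  · rw [toLex_inj.mp h]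

theorem toLex_wpow_appendInf_le {x : List α} {s : ℕ → α} (h : toLex (x ++ᵢ s) ≤ toLex s)
    (k : ℕ) : toLex (wpow x k ++ᵢ s) ≤ toLex s := by
  induction k with
  | zero => simp [wpow]
  | succ k ih =>
    rw [wpow, append_appendInf]
    exact (toLex_appendInf_le_toLex_appendInf x ih).trans h

theorem le_toLex_wpow_appendInf {x : List α} {s : ℕ → α} (h : toLex s ≤ toLex (x ++ᵢ s))
    (k : ℕ) : toLex s ≤ toLex (wpow x k ++ᵢ s) := by
  induction k with
  | zero => simp [wpow]
  | succ k ih =>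
    rw [wpow, append_appendInf]
    exact h.trans (toLex_appendInf_le_toLex_appendInf x ih)

theorem toLex_appendInf_lt_of_lt {u v : List α} (hl : u.length = v.length) (h : u < v)
    (s t : ℕ → α) : toLex (u ++ᵢ s) < toLex (v ++ᵢ t) := by
  rcases List.lt_iff_exists.mp h with ⟨-, hlt⟩ | ⟨i, hu, hv, hi, hlt⟩
  · omega
  · refine ⟨i, fun j hj => ?_, ?_⟩
    · simpa [appendInf_apply_of_lt (hj.trans hu), appendInf_apply_of_lt (hj.trans hv)]
        using hi j hj
    · simpa [appendInf_apply_of_lt hu, appendInf_apply_of_lt hv] using hlt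

theorem le_of_toLex_appendInf_le {u v : List α} (hl : u.length = v.length) {s t : ℕ → α}
    (h : toLex (u ++ᵢ s) ≤ toLex (v ++ᵢ t)) : u ≤ v :=
  not_lt.mp fun hvu => (toLex_appendInf_lt_of_lt hl.symm hvu t s).not_ge h

variable [Inhabited α] {x : List α} {s : ℕ → α}

theorem toLex_R_le_of_appendInf_le (hx : x ≠ []) (h : toLex (x ++ᵢ s) ≤ toLex s) :
    toLex (R x) ≤ toLex s := by
  by_contra! hlt
  obtain ⟨n, hn⟩ := exists_prefix_toLex_lt hlt
  exact (hn s _ (fun _ _ => rfl) fun _ => wpow_appendInf_apply_of_lt hx s).not_ge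
    (toLex_wpow_appendInf_le h n)

theorem le_toLex_R_of_le_appendInf (hx : x ≠ []) (h : toLex s ≤ toLex (x ++ᵢ s)) :
    toLex s ≤ toLex (R x) := by
  by_contra! hlt
  obtain ⟨n, hn⟩ := exists_prefix_toLex_lt hlt
  exact (hn _ s (fun _ => wpow_appendInf_apply_of_lt hx s) fun _ _ => rfl).not_ge
    (le_toLex_wpow_appendInf h n)

theorem toLex_appendInf_le_iff (hx : x ≠ []) :
    toLex (x ++ᵢ s) ≤ toLex s ↔ toLex (R x) ≤ toLex s := by
  refine ⟨toLex_R_le_of_appendInf_le hx, fun h => ?_⟩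
  by_contra! hlt
  have hs : s = R x := toLex_inj.mp (le_antisymm (le_toLex_R_of_le_appendInf hx hlt.le) h)
  rw [hs, ← R_eq_appendInf_R] at hlt
  exact hlt.false

theorem le_toLex_appendInf_iff (hx : x ≠ []) :
    toLex s ≤ toLex (x ++ᵢ s) ↔ toLex s ≤ toLex (R x) := by
  refine ⟨le_toLex_R_of_le_appendInf hx, fun h => ?_⟩
  by_contra! hlt
  have hs : s = R x := toLex_inj.mp (le_antisymm h (toLex_R_le_of_appendInf_le hx hlt.le))
  rw [hs, ← R_eq_appendInf_R] at hlt
  exact hlt.false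

theorem toLex_R_append_le {x y : List α} (hx : x ≠ []) (hy : y ≠ [])
    (h : toLex (R x) ≤ toLex (R y)) : toLex (R (x ++ y)) ≤ toLex (R (y ++ x)) := by
  have hyx : toLex (R x) ≤ toLex (R (y ++ x)) := by
    rw [← le_toLex_appendInf_iff (by simp [hy]), append_appendInf, ← R_eq_appendInf_R]
    exact (le_toLex_appendInf_iff hy).mpr h
  rw [R_append_eq_appendInf_R_append hx]
  exact (toLex_appendInf_le_iff hx).mpr hyx

theorem append_le_append_of_toLex_R_le {x y : List α} (hx : x ≠ []) (hy : y ≠ [])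
    (h : toLex (R x) ≤ toLex (R y)) : x ++ y ≤ y ++ x := by
  have hxy := toLex_R_append_le hx hy h
  rw [R_eq_appendInf_R (x ++ y), R_eq_appendInf_R (y ++ x)] at hxy
  exact le_of_toLex_appendInf_le (by simp [add_comm]) hxy

end InfiniteLex

namespace List

variable {α : Type*} [LinearOrder α]

-- Core's `List.append_left_le` concerns core's `List.le`, not the `≤` of Mathlib's `LinearOrder`.
theorem append_le_append_left {u v : List α} (h : u ≤ v) (w : List α) : w ++ u ≤ w ++ v := by
  rcases h.lt_or_eq with h | rfl
  · exact (List.append_left_lt h).le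
  · rfl

theorem append_le_append_right_of_length_eq {u v : List α} (hl : u.length = v.length)
    (h : u ≤ v) (w : List α) : u ++ w ≤ v ++ w := by
  rcases h.lt_or_eq with h | rfl
  · rcases List.lt_iff_exists.mp h with ⟨-, hlt⟩ | ⟨i, hu, hv, hi, hlt⟩
    · omega
    · refine (List.lt_iff_exists.mpr (Or.inr ⟨i, by simp; omega, by simp; omega,
        fun j hj => ?_, ?_⟩)).le
      · simpa [getElem_append_left (hj.trans hu), getElem_append_left (hj.trans hv)]
          using hi j hj
      · simpa [getElem_append_left hu, getElem_append_left hv] using hlt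
  · rfl

theorem append_flatten_le_flatten_append {a : List α} {P : List (List α)}
    (h : ∀ p ∈ P, a ++ p ≤ p ++ a) : a ++ P.flatten ≤ P.flatten ++ a := by
  induction P with
  | nil => simp
  | cons p P ih =>
    rw [forall_mem_cons] at h
    calc a ++ (p :: P).flatten = (a ++ p) ++ P.flatten := by simp
      _ ≤ (p ++ a) ++ P.flatten :=
        append_le_append_right_of_length_eq (by simp [add_comm]) h.1 _
      _ = p ++ (a ++ P.flatten) := by simp
      _ ≤ p ++ (P.flatten ++ a) := append_le_append_left (ih h.2) _
      _ = (p :: P).flatten ++ a := by simp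

theorem flatten_le_flatten_of_perm {L M : List (List α)}
    (hL : L.Pairwise fun u v => u ++ v ≤ v ++ u) (hM : M ~ L) : L.flatten ≤ M.flatten := by
  induction L generalizing M with
  | nil => rw [hM.eq_nil]
  | cons a L ih =>
    obtain ⟨P, S, rfl⟩ := append_of_mem (hM.mem_iff.mpr mem_cons_self)
    rw [pairwise_cons] at hL
    have hPS : P ++ S ~ L := (perm_middle.symm.trans hM).cons_inv
    have haP : ∀ p ∈ P, a ++ p ≤ p ++ a := fun p hp => by
      rcases mem_cons.mp (hM.subset (mem_append_left _ hp)) with rfl | hpL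
      · rfl
      · exact hL.1 p hpL
    calc (a :: L).flatten = a ++ L.flatten := flatten_cons
      _ ≤ a ++ (P ++ S).flatten := append_le_append_left (ih hL.2 hPS) a
      _ = (a ++ P.flatten) ++ S.flatten := by simp
      _ ≤ (P.flatten ++ a) ++ S.flatten :=
        append_le_append_right_of_length_eq (by simp [add_comm])
          (append_flatten_le_flatten_append haP) _
      _ = (P ++ a :: S).flatten := by simp

end List

theorem stmt10 {α : Type*} [LinearOrder α] [Inhabited α] (n : ℕ) (A : Fin n → List α)
    (hne : ∀ i, A i ≠ [])
    (hsorted : ∀ i j : Fin n, i ≤ j → InfLe (R (A i)) (R (A j)))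
    (π : Equiv.Perm (Fin n)) :
    (List.ofFn A).flatten ≤ (List.ofFn fun i => A (π i)).flatten := by
  refine List.flatten_le_flatten_of_perm ?_ (π.ofFn_comp_perm A)
  refine List.pairwise_ofFn.mpr fun i j hij => ?_
  exact append_le_append_of_toLex_R_le (hne i) (hne j)
    (infLe_iff_toLex_le.mp (hsorted i j hij.le))
end

section
/- If A_1, …, A_n are primitive and pairwise distinct nonempty words, then the lexicographically smallest concatenation over all permutations is achieved by a unique permutation. -/
/-- A word is primitive if it is nonempty and is not a proper power `B^k`, `k ≥ 2`. -/
def Primitive {α : Type*} (A : List α) : Prop :=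
  A ≠ [] ∧ ∀ (B : List α) (k : ℕ), 2 ≤ k → A ≠ wpow B k

/-!
Compare nonempty words `u` by their infinite powers `u^ω`. If `u^ω < v^ω` then `uv < vu`, and if
`u^ω = v^ω` then `uv = vu`, which for primitive words forces `u = v`. In a lexicographically
minimal concatenation no swap of adjacent factors helps, so the factors occur with `u^ω`
nondecreasing. As `u ↦ u^ω` is injective on distinct primitive words, only one arrangement of
them has this property.
-/

section

open List

variable {α : Type*}

theorem wpow_add (C : List α) (a b : ℕ) : wpow C (a + b) = wpow C a ++ wpow C b := by
  induction a with
  | zero => simp [wpow]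
  | succ a ih => simp [wpow, Nat.succ_add, ih]

theorem exists_eq_wpow_of_append_comm {u v : List α} (h : u ++ v = v ++ u) :
    ∃ C a b, u = wpow C a ∧ v = wpow C b := by
  induction hn : u.length + v.length using Nat.strong_induction_on generalizing u v with
  | _ n ih =>
  wlog huv : u.length ≤ v.length generalizing u v
  · obtain ⟨C, a, b, hu, hv⟩ := this h.symm (by omega) (by omega)
    exact ⟨C, b, a, hv, hu⟩
  obtain rfl | hu := eq_or_ne u []
  · exact ⟨v, 0, 1, rfl, (append_nil v).symm⟩
  obtain ⟨w, rfl⟩ : u <+: v :=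
    prefix_of_prefix_length_le (h ▸ prefix_append u v) (prefix_append v u) huv
  have huw : u ++ w = w ++ u := append_cancel_left (by rw [h, append_assoc])
  obtain ⟨C, a, b, rfl, rfl⟩ := ih _ (by simp [← hn, length_pos_iff.2 hu]) huw rfl
  exact ⟨C, a, a + b, rfl, (wpow_add C a b).symm⟩

theorem Primitive.eq_of_eq_wpow {u C : List α} (hu : Primitive u) {a : ℕ} (h : u = wpow C a) :
    u = C := by
  match a, h with
  | 0, h => exact absurd h hu.1
  | 1, h => simpa [wpow] using h
  | k + 2, h => exact absurd h (hu.2 C _ (by omega))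

theorem Primitive.eq_of_append_comm {u v : List α} (hu : Primitive u) (hv : Primitive v)
    (h : u ++ v = v ++ u) : u = v := by
  obtain ⟨C, a, b, rfl, hvC⟩ := exists_eq_wpow_of_append_comm h
  rw [hu.eq_of_eq_wpow rfl, hv.eq_of_eq_wpow hvC]

theorem Function.Periodic.eq_of_forall_lt_add_eq {β : Type*} {x y : ℕ → β} {p q : ℕ}
    (hx : Function.Periodic x p) (hy : Function.Periodic y q) (hp : 0 < p) (hq : 0 < q)
    (h : ∀ i < p + q, x i = y i) : x = y := by
  funext i
  induction i using Nat.strong_induction_on with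
  | _ i ih =>
    by_cases hi : i < p + q
    · exact h i hi
    obtain ⟨k, rfl⟩ : ∃ k, i = k + q + p := ⟨i - (p + q), by omega⟩
    calc x (k + q + p) = y k := by rw [hx, ih _ (by omega), hy]
      _ = x k := (ih k (by omega)).symm
      _ = y (k + q + p) := by rw [add_right_comm, hy, ← ih _ (by omega), hx]

namespace List

/-- The infinite power `u^ω = u u u ⋯`; the value `⊥` occurs only for `u = []` (junk). -/
def omegaPow (u : List α) (i : ℕ) : WithBot α := u[i % u.length]?

theorem omegaPow_periodic (u : List α) : Function.Periodic (omegaPow u) u.length := by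
  intro i
  simp only [omegaPow]
  rw [Nat.add_mod_right]

theorem omegaPow_eq_getElem (u : List α) {i : ℕ} (hi : i < u.length) : omegaPow u i = u[i] := by
  simp only [omegaPow, Nat.mod_eq_of_lt hi, getElem?_eq_getElem hi]
  rfl

theorem getElem_append_eq_omegaPow {u v : List α} (hu : u ≠ []) {j : ℕ}
    (hj : j < (u ++ v).length) (h : ∀ i < j, omegaPow u i = omegaPow v i) :
    ((u ++ v)[j] : WithBot α) = omegaPow u j := by
  by_cases hju : j < u.length
  · rw [getElem_append_left hju, omegaPow_eq_getElem u hju]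
  obtain ⟨m, rfl⟩ : ∃ m, j = m + u.length := ⟨j - u.length, by omega⟩
  have hmv : m < v.length := by rw [length_append] at hj; omega
  rw [getElem_append_right (by omega), omegaPow_periodic,
    h m (by have := length_pos_iff.2 hu; omega), omegaPow_eq_getElem v hmv]
  simp

theorem append_comm_of_omegaPow_eq {u v : List α} (hu : u ≠ []) (hv : v ≠ [])
    (h : omegaPow u = omegaPow v) : u ++ v = v ++ u :=
  ext_getElem (by simp [add_comm]) fun j h₁ h₂ => WithBot.coe_inj.1 <| by
    rw [getElem_append_eq_omegaPow hu h₁ fun i _ => congrFun h i,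
      getElem_append_eq_omegaPow hv h₂ fun i _ => (congrFun h i).symm, h]

theorem append_lt_append_of_omegaPow_lt [LinearOrder α] {u v : List α} (hu : u ≠ [])
    (hv : v ≠ []) (h : toLex (omegaPow u) < toLex (omegaPow v)) : u ++ v < v ++ u := by
  obtain ⟨k, hagree, hlt⟩ := h
  have hk : k < u.length + v.length := by
    by_contra hk
    refine hlt.ne (congrFun ((omegaPow_periodic u).eq_of_forall_lt_add_eq (omegaPow_periodic v)
      (length_pos_iff.2 hu) (length_pos_iff.2 hv) fun i hi => hagree i (by omega)) k)
  have huv (j : ℕ) (hj : j ≤ k) : ((u ++ v)[j]'(by simp; omega) : WithBot α) = omegaPow u j :=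
    getElem_append_eq_omegaPow hu _ fun i hi => hagree i (by omega)
  have hvu (j : ℕ) (hj : j ≤ k) : ((v ++ u)[j]'(by simp; omega) : WithBot α) = omegaPow v j :=
    getElem_append_eq_omegaPow hv _ fun i hi => (hagree i (by omega)).symm
  refine List.lt_iff_exists.2 <|
    Or.inr ⟨k, by simpa using hk, by simp; omega, fun j hj => ?_, ?_⟩
  · exact WithBot.coe_inj.1 ((huv j hj.le).trans ((hagree j hj).trans (hvu j hj.le).symm))
  · exact WithBot.coe_lt_coe.1 (by rw [huv k le_rfl, hvu k le_rfl]; exact hlt)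

theorem append_lt_append_of_lt_of_length_eq [LinearOrder α] {s t : List α}
    (hlen : s.length = t.length) (h : s < t) (y z : List α) : s ++ y < t ++ z := by
  induction h with
  | nil => simp at hlen
  | rel hab => exact Lex.rel hab
  | cons _ ih => exact Lex.cons (ih (by simpa using hlen))

theorem flatten_append_cons_cons_lt [LinearOrder α] {a b : List α} (h : b ++ a < a ++ b)
    (x y : List (List α)) : (x ++ b :: a :: y).flatten < (x ++ a :: b :: y).flatten := by
  simp only [flatten_append, flatten_cons]
  rw [← append_assoc b, ← append_assoc a]
  exact append_left_lt (append_lt_append_of_lt_of_length_eq (by simp [add_comm]) h _ _)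

theorem exists_perm_ofFn_comp_eq_of_eq_append_cons_cons {β : Type*} {n : ℕ} {g : Fin n → β}
    {x y : List β} {a b : β} (h : ofFn g = x ++ a :: b :: y) :
    ∃ σ : Equiv.Perm (Fin n), ofFn (g ∘ σ) = x ++ b :: a :: y := by
  have hlen := congrArg length h
  simp only [length_ofFn, length_append, length_cons] at hlen
  have hg (m : Fin n) : g m = (x ++ a :: b :: y)[m.1]'(by simp; omega) := by simp [← h]
  refine ⟨Equiv.swap ⟨x.length, by omega⟩ ⟨x.length + 1, by omega⟩,
    ext_getElem (by simp; omega) fun j h₁ h₂ => ?_⟩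
  simp only [List.getElem_ofFn, Function.comp_apply, hg, Equiv.swap_apply_def]
  grind

end List

theorem monotone_omegaPow_of_flatten_minimal [LinearOrder α] {n : ℕ} {A : Fin n → List α}
    (hA : ∀ i, A i ≠ []) {π : Equiv.Perm (Fin n)}
    (hπ : ∀ σ : Equiv.Perm (Fin n),
      (ofFn fun i => A (π i)).flatten ≤ (ofFn fun i => A (σ i)).flatten) :
    Monotone fun i => toLex (omegaPow (A (π i))) := by
  have hmap : (ofFn fun i => toLex (omegaPow (A (π i)))) =
      (ofFn fun i => A (π i)).map (toLex ∘ omegaPow) := by rw [map_ofFn]; rfl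
  rw [← sortedLE_ofFn_iff, sortedLE_iff_isChain, hmap, isChain_map,
    isChain_iff_forall_rel_of_append_cons_cons]
  intro a b x y hxy
  have hne {c : List α} (hc : c ∈ ofFn fun i => A (π i)) : c ≠ [] := by
    obtain ⟨i, rfl⟩ := mem_ofFn.1 hc
    exact hA _
  by_contra hba
  obtain ⟨σ, hσ⟩ := exists_perm_ofFn_comp_eq_of_eq_append_cons_cons hxy
  have hlt := flatten_append_cons_cons_lt (append_lt_append_of_omegaPow_lt
    (hne (by simp [hxy])) (hne (by simp [hxy])) (not_le.1 hba)) x y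
  rw [← hσ, ← hxy] at hlt
  exact (hπ (π * σ)).not_gt hlt

end

theorem stmt12 {α : Type*} [LinearOrder α] (n : ℕ) (A : Fin n → List α)
    (hprim : ∀ i, Primitive (A i)) (hinj : Function.Injective A) :
    ∃! π : Equiv.Perm (Fin n),
      ∀ σ : Equiv.Perm (Fin n),
        (List.ofFn fun i => A (π i)).flatten ≤ (List.ofFn fun i => A (σ i)).flatten := by
  have hne i : A i ≠ [] := (hprim i).1
  have hkey : Function.Injective fun i => toLex (A i).omegaPow := fun i j h =>
    hinj <| (hprim i).eq_of_append_comm (hprim j) <|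
      List.append_comm_of_omegaPow_eq (hne i) (hne j) h
  obtain ⟨π₀, hπ₀⟩ :=
    Finite.exists_min fun π : Equiv.Perm (Fin n) => (List.ofFn fun i => A (π i)).flatten
  refine ⟨π₀, hπ₀, fun π hπ => Equiv.ext fun i => hkey ?_⟩
  have hcomp := Tuple.unique_monotone (f := fun i => toLex (A i).omegaPow)
    (monotone_omegaPow_of_flatten_minimal hne hπ) (monotone_omegaPow_of_flatten_minimal hne hπ₀)
  exact congrFun hcomp i
end

section
/- Let A_1, …, A_n be primitive and pairwise distinct nonempty words, with N_i = A_i^{d_i}, d_i = max_j deg_{A_j}(A_i). Suppose N_i is a prefix of N_j (i ≠ j). Then |N_i| < |A_i| + |A_j|. -/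
lemma wpow_add_s16 {α : Type*} (A : List α) (m k : ℕ) :
    wpow A (m + k) = wpow A m ++ wpow A k := by
  induction m with
  | zero => simp [wpow]
  | succ m ih =>
    have : m + 1 + k = (m + k) + 1 := by omega
    rw [this]
    simp [wpow, ih]

lemma wpow_prefix_succ {α : Type*} (A : List α) (m : ℕ) :
    wpow A m <+: wpow A (m + 1) := by
  induction m with
  | zero => simp [wpow]
  | succ m ih => exact (List.prefix_append_right_inj A).mpr ih

lemma comm_pow {α : Type*} : ∀ (N : ℕ) (X Y : List α), X.length + Y.length ≤ N →
    X ++ Y = Y ++ X → ∃ C k l, X = wpow C k ∧ Y = wpow C l := by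
  intro N
  induction N with
  | zero =>
    intro X Y hlen _
    have hX : X = [] := by
      have : X.length = 0 := by omega
      exact List.length_eq_zero_iff.mp this
    have hY : Y = [] := by
      have : Y.length = 0 := by omega
      exact List.length_eq_zero_iff.mp this
    exact ⟨[], 0, 0, by simp [hX, wpow], by simp [hY, wpow]⟩
  | succ N ih =>
    intro X Y hlen h
    by_cases hX : X = []
    · exact ⟨Y, 0, 1, by simp [hX, wpow], by simp [wpow]⟩
    by_cases hY : Y = []
    · exact ⟨X, 1, 0, by simp [wpow], by simp [hY, wpow]⟩
    have hXpos : 1 ≤ X.length := List.length_pos_iff.mpr hX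
    have hYpos : 1 ≤ Y.length := List.length_pos_iff.mpr hY
    by_cases hle : X.length ≤ Y.length
    · have h1 : X <+: Y ++ X := by rw [← h]; exact List.prefix_append X Y
      have h2 : X <+: Y :=
        List.prefix_of_prefix_length_le h1 (List.prefix_append Y X) hle
      obtain ⟨Y', rfl⟩ := h2
      have h' : X ++ Y' = Y' ++ X :=
        List.append_cancel_left (as := X) (by rw [h, List.append_assoc])
      have hlen' : X.length + Y'.length ≤ N := by
        simp only [List.length_append] at hlen; omega
      obtain ⟨C, k, l, hC1, hC2⟩ := ih X Y' hlen' h'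
      exact ⟨C, k, k + l, hC1, by rw [wpow_add_s16, ← hC1, ← hC2]⟩
    · have h1 : Y <+: X ++ Y := by rw [h]; exact List.prefix_append Y X
      have h2 : Y <+: X :=
        List.prefix_of_prefix_length_le h1 (List.prefix_append X Y) (by omega)
      obtain ⟨X', rfl⟩ := h2
      have h' : X' ++ Y = Y ++ X' :=
        List.append_cancel_left (as := Y) (by rw [← List.append_assoc]; exact h)
      have hlen' : X'.length + Y.length ≤ N := by
        simp only [List.length_append] at hlen; omega
      obtain ⟨C, k, l, hC1, hC2⟩ := ih X' Y hlen' h'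
      exact ⟨C, l + k, l, by rw [wpow_add_s16, ← hC1, ← hC2], hC2⟩

lemma primitive_eq_of_pow {α : Type*} {X C : List α} {k : ℕ}
    (hp : Primitive X) (h : X = wpow C k) : X = C := by
  match k with
  | 0 => exact absurd h hp.1
  | 1 => simpa [wpow] using h
  | k + 2 => exact absurd h (hp.2 C (k + 2) (by omega))

theorem stmt16 {α : Type*} (n : ℕ) (A : Fin n → List α) (d : Fin n → ℕ)
    (hprim : ∀ i, Primitive (A i)) (hinj : Function.Injective A)
    (hd : ∀ i, (∃ j, (wpow (A i) (d i)) <+: A j) ∧ ∀ j, ¬ (wpow (A i) (d i + 1)) <+: A j)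
    (i j : Fin n) (hij : i ≠ j)
    (hpre : (wpow (A i) (d i)) <+: (wpow (A j) (d j))) :
    (wpow (A i) (d i)).length < (A i).length + (A j).length := by
  by_contra hcon
  push_neg at hcon
  set W := wpow (A i) (d i) with hW
  set W' := wpow (A j) (d j) with hW'
  set m := (A i).length + (A j).length with hm
  set U := W.take m with hU
  have hUW : U <+: W := List.take_prefix m W
  have hUlen : U.length = m := by
    rw [hU, List.length_take]; omega
  -- U <+: A i ++ U
  have hWAi : W <+: A i ++ W := wpow_prefix_succ (A i) (d i)
  have hUAi : U <+: A i ++ U := by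
    apply List.prefix_of_prefix_length_le (hUW.trans hWAi)
      ((List.prefix_append_right_inj (A i)).mpr hUW)
    simp [hUlen] <;> omega
  -- U <+: A j ++ U
  have hWAj : W' <+: A j ++ W' := wpow_prefix_succ (A j) (d j)
  have hUW' : U <+: W' := hUW.trans hpre
  have hUAj : U <+: A j ++ U := by
    apply List.prefix_of_prefix_length_le (hUW'.trans hWAj)
      ((List.prefix_append_right_inj (A j)).mpr hUW')
    simp [hUlen] <;> omega
  -- A i <+: U and A j <+: U
  have hAiU : A i <+: U :=
    List.prefix_of_prefix_length_le (List.prefix_append _ _) hUAi (by rw [hUlen]; omega)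
  have hAjU : A j <+: U :=
    List.prefix_of_prefix_length_le (List.prefix_append _ _) hUAj (by rw [hUlen]; omega)
  -- A i ++ A j = U
  have e1 : A i ++ A j = U := by
    have h1 : A i ++ A j <+: A i ++ U := (List.prefix_append_right_inj (A i)).mpr hAjU
    have h2 : A i ++ A j <+: U :=
      List.prefix_of_prefix_length_le h1 hUAi (by simp [hUlen] <;> omega)
    exact h2.eq_of_length (by simp [hUlen] <;> omega)
  have e2 : A j ++ A i = U := by
    have h1 : A j ++ A i <+: A j ++ U := (List.prefix_append_right_inj (A j)).mpr hAiU
    have h2 : A j ++ A i <+: U :=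
      List.prefix_of_prefix_length_le h1 hUAj (by simp [hUlen] <;> omega)
    exact h2.eq_of_length (by simp [hUlen] <;> omega)
  have hcomm : A i ++ A j = A j ++ A i := by rw [e1, e2]
  obtain ⟨C, k, l, hC1, hC2⟩ :=
    comm_pow ((A i).length + (A j).length) (A i) (A j) le_rfl hcomm
  have hi : A i = C := primitive_eq_of_pow (hprim i) hC1
  have hj : A j = C := primitive_eq_of_pow (hprim j) hC2
  exact hij (hinj (hi.trans hj.symm))
end
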